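/- The polynomial G_{q4}(X,Y) = |X|²|Y|² − |⟨X,Y⟩_ℍ|², viewed as a real quartic form in the 8k real coordinates of (X,Y) ∈ ℍ^k × ℍ^k with k ≥ 2, is nonnegative but is not a sum of squares of real polynomials. -/

import Mathlib

open MvPolynomial

/-- The four real components of a quaternion. -/
def qcomp (q : Quaternion ℝ) : Fin 4 → ℝ := ![q.re, q.imI, q.imJ, q.imK]

/-- The `8k` real coordinates of a pair `(X, Y) ∈ ℍ^k × ℍ^k`, indexed by
`Fin k × Bool × Fin 4`. -/
def qcoords {k : ℕ} (X Y : Fin k → Quaternion ℝ) : Fin k × Bool × Fin 4 → ℝ :=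
  fun p => qcomp (if p.2.1 then Y p.1 else X p.1) p.2.2

noncomputable section StmtAux

namespace StmtAux

/-! ### Polynomial infrastructure -/

variable {σ : Type*} [Fintype σ] [DecidableEq σ]

/-- The univariate polynomial `t ↦ h(t • v)`. -/
def tpoly (v : σ → ℝ) (h : MvPolynomial σ ℝ) : Polynomial ℝ :=
  MvPolynomial.aeval (fun s => Polynomial.C (v s) * Polynomial.X) h

omit [Fintype σ] [DecidableEq σ] in
lemma tpoly_eval (v : σ → ℝ) (h : MvPolynomial σ ℝ) (t : ℝ) :
    (tpoly v h).eval t = eval (fun s => v s * t) h := by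
  induction h using MvPolynomial.induction_on with
  | C a => simp [tpoly]
  | add p q hp hq => simp only [tpoly, map_add, Polynomial.eval_add] at *; rw [hp, hq]
  | mul_X p s hp => simp only [tpoly, map_mul, aeval_X, Polynomial.eval_mul, Polynomial.eval_C,
      Polynomial.eval_X, eval_mul, eval_X] at *; rw [hp]

lemma tpoly_repr (h : MvPolynomial σ ℝ) :
    ∃ (a : ℝ) (b : σ → ℝ) (c : σ → σ → ℝ), ∀ v : σ → ℝ,
      (tpoly v h).coeff 0 = a ∧
      (tpoly v h).coeff 1 = ∑ s, b s * v s ∧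
      (tpoly v h).coeff 2 = ∑ s, ∑ t, c s t * v s * v t := by
  induction h using MvPolynomial.induction_on with
  | C r =>
      refine ⟨r, 0, 0, fun v => ?_⟩
      simp [tpoly, aeval_C, Polynomial.algebraMap_eq, Polynomial.coeff_C]
  | add p q hp hq =>
      obtain ⟨a1, b1, c1, H1⟩ := hp
      obtain ⟨a2, b2, c2, H2⟩ := hq
      refine ⟨a1 + a2, fun s => b1 s + b2 s, fun s t => c1 s t + c2 s t, fun v => ?_⟩
      obtain ⟨e1, e2, e3⟩ := H1 v
      obtain ⟨f1, f2, f3⟩ := H2 v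
      simp only [tpoly, map_add, Polynomial.coeff_add] at *
      refine ⟨by rw [e1, f1], by rw [e2, f2, ← Finset.sum_add_distrib]; simp [add_mul], ?_⟩
      rw [e3, f3, ← Finset.sum_add_distrib]
      congr 1; funext s
      rw [← Finset.sum_add_distrib]
      congr 1; funext t
      ring
  | mul_X p s hp =>
      obtain ⟨a, b, c, H⟩ := hp
      refine ⟨0, fun t => if t = s then a else 0, fun t u => if u = s then b t else 0, fun v => ?_⟩
      obtain ⟨e1, e2, e3⟩ := H v
      have key : tpoly v (p * X s) = (tpoly v p * Polynomial.C (v s)) * Polynomial.X := by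
        simp [tpoly, map_mul, mul_assoc]
      refine ⟨?_, ?_, ?_⟩
      · rw [key]; simp
      · rw [key, show (1:ℕ) = 0 + 1 from rfl, Polynomial.coeff_mul_X, Polynomial.coeff_mul_C, e1]
        simp [ite_mul]
      · rw [key, show (2:ℕ) = 1 + 1 from rfl, Polynomial.coeff_mul_X, Polynomial.coeff_mul_C, e2]
        rw [Finset.sum_mul]
        congr 1; funext t
        simp [ite_mul, mul_comm, mul_left_comm, mul_assoc]

lemma coeff_sq_zero (p : Polynomial ℝ) : (p ^ 2).coeff 0 = p.coeff 0 ^ 2 := by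
  rw [pow_two, Polynomial.mul_coeff_zero, ← pow_two]

lemma coeff_sq_two (p : Polynomial ℝ) :
    (p ^ 2).coeff 2 = 2 * (p.coeff 0 * p.coeff 2) + p.coeff 1 ^ 2 := by
  rw [pow_two, Polynomial.coeff_mul, Finset.Nat.sum_antidiagonal_eq_sum_range_succ_mk]
  simp [Finset.sum_range_succ]; ring

lemma coeff_sq_four (p : Polynomial ℝ) :
    (p ^ 2).coeff 4 = 2 * (p.coeff 0 * p.coeff 4) + 2 * (p.coeff 1 * p.coeff 3) + p.coeff 2 ^ 2 := by
  rw [pow_two, Polynomial.coeff_mul, Finset.Nat.sum_antidiagonal_eq_sum_range_succ_mk]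
  simp [Finset.sum_range_succ]; ring

lemma sos_eq_zero {N : ℕ} {f : Fin N → ℝ} (hsum : (∑ j, f j ^ 2) = 0) : ∀ j, f j = 0 := by
  intro j
  have h := (Finset.sum_eq_zero_iff_of_nonneg (fun i _ => sq_nonneg (f i))).mp hsum j
    (Finset.mem_univ j)
  exact (pow_eq_zero_iff two_ne_zero).mp h

/-! ### The quartic form and its basic properties -/

variable {k : ℕ}

def Fq (X Y : Fin k → Quaternion ℝ) : ℝ :=
  (∑ i, Quaternion.normSq (X i)) * (∑ i, Quaternion.normSq (Y i))
    - Quaternion.normSq (∑ i, X i * star (Y i))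

lemma Fq_nonneg (X Y : Fin k → Quaternion ℝ) : 0 ≤ Fq X Y := by
  rw [Fq, sub_nonneg]
  have h1 : ‖∑ i, X i * star (Y i)‖ ≤ ∑ i, ‖X i‖ * ‖Y i‖ := by
    refine (norm_sum_le _ _).trans (Finset.sum_le_sum fun i _ => le_of_eq ?_)
    rw [norm_mul, norm_star]
  calc Quaternion.normSq (∑ i, X i * star (Y i)) = ‖∑ i, X i * star (Y i)‖ ^ 2 := by
        rw [Quaternion.normSq_eq_norm_mul_self, sq]
    _ ≤ (∑ i, ‖X i‖ * ‖Y i‖) ^ 2 := pow_le_pow_left₀ (norm_nonneg _) h1 2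
    _ ≤ (∑ i, ‖X i‖ ^ 2) * (∑ i, ‖Y i‖ ^ 2) := Finset.sum_mul_sq_le_sq_mul_sq _ _ _
    _ = (∑ i, Quaternion.normSq (X i)) * (∑ i, Quaternion.normSq (Y i)) := by
        congr 1 <;> exact Finset.sum_congr rfl fun i _ => by
          rw [Quaternion.normSq_eq_norm_mul_self, sq]

lemma sum_self_mul_star (X : Fin k → Quaternion ℝ) :
    (∑ i, X i * star (X i)) = ((∑ i, Quaternion.normSq (X i) : ℝ) : Quaternion ℝ) := by
  rw [← Quaternion.algebraMap_def, map_sum]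
  exact Finset.sum_congr rfl fun i _ => by
    rw [Quaternion.self_mul_star, Quaternion.algebraMap_def]

lemma Fq_right (X : Fin k → Quaternion ℝ) (a : Quaternion ℝ) :
    Fq X (fun i => a * X i) = 0 := by
  have h1 : (∑ i, Quaternion.normSq (a * X i))
      = Quaternion.normSq a * ∑ i, Quaternion.normSq (X i) := by
    rw [Finset.mul_sum]; exact Finset.sum_congr rfl fun i _ => map_mul _ _ _
  have h2 : (∑ i, X i * star (a * X i))
      = ((∑ i, Quaternion.normSq (X i) : ℝ) : Quaternion ℝ) * star a := by
    rw [← sum_self_mul_star, Finset.sum_mul]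
    exact Finset.sum_congr rfl fun i _ => by rw [star_mul, mul_assoc]
  rw [Fq, h1, h2, map_mul, Quaternion.normSq_star, Quaternion.normSq_coe]
  ring

lemma Fq_left (Y : Fin k → Quaternion ℝ) (a : Quaternion ℝ) :
    Fq (fun i => a * Y i) Y = 0 := by
  have h1 : (∑ i, Quaternion.normSq (a * Y i))
      = Quaternion.normSq a * ∑ i, Quaternion.normSq (Y i) := by
    rw [Finset.mul_sum]; exact Finset.sum_congr rfl fun i _ => map_mul _ _ _
  have h2 : (∑ i, a * Y i * star (Y i))
      = a * ((∑ i, Quaternion.normSq (Y i) : ℝ) : Quaternion ℝ) := by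
    rw [← sum_self_mul_star, Finset.mul_sum]
    exact Finset.sum_congr rfl fun i _ => by rw [mul_assoc]
  rw [Fq, h1, h2, map_mul, Quaternion.normSq_coe]
  ring

lemma Fq_smul (t : ℝ) (X Y : Fin k → Quaternion ℝ) :
    Fq (t • X) (t • Y) = t ^ 4 * Fq X Y := by
  have h1 : (∑ i, Quaternion.normSq ((t • X) i)) = t ^ 2 * ∑ i, Quaternion.normSq (X i) := by
    rw [Finset.mul_sum]; exact Finset.sum_congr rfl fun i _ => by
      rw [Pi.smul_apply, Quaternion.normSq_smul]
  have h2 : (∑ i, Quaternion.normSq ((t • Y) i)) = t ^ 2 * ∑ i, Quaternion.normSq (Y i) := by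
    rw [Finset.mul_sum]; exact Finset.sum_congr rfl fun i _ => by
      rw [Pi.smul_apply, Quaternion.normSq_smul]
  have h3 : (∑ i, (t • X) i * star ((t • Y) i)) = (t * t) • ∑ i, X i * star (Y i) := by
    rw [Finset.smul_sum]
    exact Finset.sum_congr rfl fun i _ => by
      rw [Pi.smul_apply, Pi.smul_apply, Quaternion.star_smul, smul_mul_assoc, mul_smul_comm,
        smul_smul]
  rw [Fq, Fq, h1, h2, h3, Quaternion.normSq_smul]
  ring

/-! ### Coordinate lemmas -/

lemma qcomp_zero (z : Fin 4) : qcomp 0 z = 0 := by fin_cases z <;> simp [qcomp, Quaternion.re_zero, Quaternion.imI_zero, Quaternion.imJ_zero, Quaternion.imK_zero]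

lemma qcomp_add (p q : Quaternion ℝ) (z : Fin 4) : qcomp (p + q) z = qcomp p z + qcomp q z := by
  fin_cases z <;> simp [qcomp]

lemma qcomp_smul (t : ℝ) (q : Quaternion ℝ) (z : Fin 4) : qcomp (t • q) z = t * qcomp q z := by
  fin_cases z <;> simp [qcomp]

lemma qcoords_smul (t : ℝ) (X Y : Fin k → Quaternion ℝ) :
    qcoords (t • X) (t • Y) = fun s => qcoords X Y s * t := by
  funext p
  obtain ⟨i, b, z⟩ := p
  cases b <;> simp [qcoords, qcomp_smul, mul_comm]

lemma qcoords_split (X Y : Fin k → Quaternion ℝ) :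
    qcoords X Y = fun s => qcoords X 0 s + qcoords 0 Y s := by
  funext p
  obtain ⟨i, b, z⟩ := p
  cases b <;> simp [qcoords, qcomp_zero]

lemma qcoords_addL (X X' : Fin k → Quaternion ℝ) :
    qcoords (fun i => X i + X' i) (0 : Fin k → Quaternion ℝ)
      = fun s => qcoords X 0 s + qcoords X' 0 s := by
  funext p
  obtain ⟨i, b, z⟩ := p
  cases b <;> simp [qcoords, qcomp_zero, qcomp_add]

lemma qcoords_addR (W W' : Fin k → Quaternion ℝ) :
    qcoords (0 : Fin k → Quaternion ℝ) (fun i => W i + W' i)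
      = fun s => qcoords 0 W s + qcoords 0 W' s := by
  funext p
  obtain ⟨i, b, z⟩ := p
  cases b <;> simp [qcoords, qcomp_zero, qcomp_add]

lemma qcoords_zero :
    qcoords (0 : Fin k → Quaternion ℝ) (0 : Fin k → Quaternion ℝ)
      = (0 : Fin k × Bool × Fin 4 → ℝ) := by
  funext p
  obtain ⟨i, b, z⟩ := p
  cases b <;> simp [qcoords, qcomp_zero]

/-! ### Bilinear forms -/

def Bform (c : σ → σ → ℝ) (u w : σ → ℝ) : ℝ := ∑ s, ∑ t, c s t * u s * w t

lemma Bform_addL (c : σ → σ → ℝ) (u u' w : σ → ℝ) :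
    Bform c (fun s => u s + u' s) w = Bform c u w + Bform c u' w := by
  simp only [Bform, ← Finset.sum_add_distrib]
  refine Finset.sum_congr rfl fun s _ => Finset.sum_congr rfl fun t _ => by ring

lemma Bform_addR (c : σ → σ → ℝ) (u w w' : σ → ℝ) :
    Bform c u (fun s => w s + w' s) = Bform c u w + Bform c u w' := by
  simp only [Bform, ← Finset.sum_add_distrib]
  refine Finset.sum_congr rfl fun s _ => Finset.sum_congr rfl fun t _ => by ring

lemma Bform_zeroR (c : σ → σ → ℝ) (u : σ → ℝ) : Bform c u (0 : σ → ℝ) = 0 := by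
  simp [Bform]

lemma Bform_zeroL (c : σ → σ → ℝ) (w : σ → ℝ) : Bform c (0 : σ → ℝ) w = 0 := by
  simp [Bform]

/-! ### The quaternion units and the main linear-algebra step -/

def qi : Quaternion ℝ := ⟨0,1,0,0⟩
def qj : Quaternion ℝ := ⟨0,0,1,0⟩
def qk : Quaternion ℝ := ⟨0,0,0,1⟩

lemma qij : qi * qj = qk := by
  ext <;> simp only [Quaternion.re_mul, Quaternion.imI_mul, Quaternion.imJ_mul, Quaternion.imK_mul] <;> simp [qi, qj, qk]
lemma qji : qj * qi = -qk := by
  ext <;> simp only [Quaternion.re_mul, Quaternion.imI_mul, Quaternion.imJ_mul, Quaternion.imK_mul, Quaternion.re_neg, Quaternion.imI_neg, Quaternion.imJ_neg, Quaternion.imK_neg] <;> simp [qi, qj, qk]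
lemma qkk : qk * qk = -1 := by
  ext <;> simp only [Quaternion.re_mul, Quaternion.imI_mul, Quaternion.imJ_mul, Quaternion.imK_mul, Quaternion.re_neg, Quaternion.imI_neg, Quaternion.imJ_neg, Quaternion.imK_neg, Quaternion.re_one, Quaternion.imI_one, Quaternion.imJ_one, Quaternion.imK_one] <;> simp [qk]

section linalg
variable (c : (Fin k × Bool × Fin 4) → (Fin k × Bool × Fin 4) → ℝ)

/-- the mixed bilinear part -/
def Smix (c : (Fin k × Bool × Fin 4) → (Fin k × Bool × Fin 4) → ℝ)
    (X W : Fin k → Quaternion ℝ) : ℝ :=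
  Bform c (qcoords X 0) (qcoords 0 W) + Bform c (qcoords 0 W) (qcoords X 0)

lemma Smix_addL (X X' W : Fin k → Quaternion ℝ) :
    Smix c (fun i => X i + X' i) W = Smix c X W + Smix c X' W := by
  rw [Smix, qcoords_addL, Bform_addL, Bform_addR, Smix, Smix]; ring

lemma Smix_addR (X W W' : Fin k → Quaternion ℝ) :
    Smix c X (fun i => W i + W' i) = Smix c X W + Smix c X W' := by
  rw [Smix, qcoords_addR, Bform_addL, Bform_addR, Smix, Smix]; ring

lemma Smix_zeroR (X : Fin k → Quaternion ℝ) :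
    Smix c X (0 : Fin k → Quaternion ℝ) = 0 := by
  have h : qcoords (0 : Fin k → Quaternion ℝ) (0 : Fin k → Quaternion ℝ)
      = (0 : Fin k × Bool × Fin 4 → ℝ) := qcoords_zero
  rw [Smix, h, Bform_zeroR, Bform_zeroL, add_zero]

lemma Smix_negR (X W : Fin k → Quaternion ℝ) :
    Smix c X (fun i => -(W i)) = - Smix c X W := by
  have h := Smix_addR c X W (fun i => -(W i))
  have h2 : (fun i => W i + -(W i)) = (0 : Fin k → Quaternion ℝ) := by funext i; simp
  rw [h2, Smix_zeroR] at h
  linarith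

theorem key_linalg
    (HR : ∀ (X : Fin k → Quaternion ℝ) (a : Quaternion ℝ),
      Bform c (qcoords X (fun i => a * X i)) (qcoords X (fun i => a * X i)) = 0)
    (HL : ∀ (Y : Fin k → Quaternion ℝ) (a : Quaternion ℝ),
      Bform c (qcoords (fun i => a * Y i) Y) (qcoords (fun i => a * Y i) Y) = 0) :
    ∀ X Y : Fin k → Quaternion ℝ, Bform c (qcoords X Y) (qcoords X Y) = 0 := by
  have pure1 : ∀ X : Fin k → Quaternion ℝ, Bform c (qcoords X 0) (qcoords X 0) = 0 := by
    intro X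
    have h := HR X 0
    rw [show (fun i => (0 : Quaternion ℝ) * X i) = (0 : Fin k → Quaternion ℝ) by
      funext i; simp] at h
    exact h
  have pure2 : ∀ Y : Fin k → Quaternion ℝ, Bform c (qcoords 0 Y) (qcoords 0 Y) = 0 := by
    intro Y
    have h := HL Y 0
    rw [show (fun i => (0 : Quaternion ℝ) * Y i) = (0 : Fin k → Quaternion ℝ) by
      funext i; simp] at h
    exact h
  have Bsplit : ∀ X Y : Fin k → Quaternion ℝ,
      Bform c (qcoords X Y) (qcoords X Y)
      = Bform c (qcoords X 0) (qcoords X 0) + Smix c X Y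
        + Bform c (qcoords 0 Y) (qcoords 0 Y) := by
    intro X Y
    rw [qcoords_split, Bform_addL, Bform_addR, Bform_addR, Smix]; ring
  have Svan : ∀ (X : Fin k → Quaternion ℝ) (a : Quaternion ℝ),
      Smix c X (fun i => a * X i) = 0 := by
    intro X a
    have h := HR X a
    rw [Bsplit, pure1, pure2] at h
    linarith
  have pol : ∀ (a : Quaternion ℝ) (U V : Fin k → Quaternion ℝ),
      Smix c U (fun i => a * V i) = - Smix c V (fun i => a * U i) := by
    intro a U V
    have h := Svan (fun i => U i + V i) a
    rw [show (fun i => a * (U i + V i)) = (fun i => (a * U i) + (a * V i)) by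
      funext i; rw [mul_add]] at h
    rw [Smix_addL, Smix_addR, Smix_addR, Svan U a, Svan V a] at h
    linarith
  have A1 : ∀ U V : Fin k → Quaternion ℝ, Smix c U V = - Smix c V U := by
    intro U V
    have h := pol 1 U V
    rw [show (fun i => (1 : Quaternion ℝ) * V i) = V by funext i; rw [one_mul],
        show (fun i => (1 : Quaternion ℝ) * U i) = U by funext i; rw [one_mul]] at h
    exact h
  have Sfinal : ∀ X W : Fin k → Quaternion ℝ, Smix c X W = 0 := by
    have hk0 : ∀ X X' : Fin k → Quaternion ℝ, Smix c X (fun i => qk * X' i) = 0 := by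
      intro X X'
      have e1 : Smix c X (fun i => qk * X' i)
          = - Smix c (fun i => qj * X' i) (fun i => qi * X i) := by
        have h := pol qi X (fun i => qj * X' i)
        rw [show (fun i => qi * (qj * X' i)) = (fun i => qk * X' i) by
          funext l; rw [← mul_assoc, qij]] at h
        exact h
      have e2 : Smix c (fun i => qj * X' i) (fun i => qi * X i)
          = - Smix c (fun i => qi * X i) (fun i => qj * X' i) := A1 _ _
      have e3 : Smix c (fun i => qi * X i) (fun i => qj * X' i)
          = - Smix c X' (fun i => -(qk * X i)) := by
        have h := pol qj (fun i => qi * X i) X'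
        rw [show (fun i => qj * (qi * X i)) = (fun i => -(qk * X i)) by
          funext l; rw [← mul_assoc, qji, neg_mul]] at h
        exact h
      have e4 : Smix c X' (fun i => -(qk * X i)) = - Smix c X' (fun i => qk * X i) :=
        Smix_negR c X' _
      have e5 : Smix c X' (fun i => qk * X i) = - Smix c X (fun i => qk * X' i) := pol qk X' X
      linarith
    intro X W
    have h := hk0 X (fun i => -(qk * W i))
    rw [show (fun i => qk * -(qk * W i)) = W by
      funext l; rw [mul_neg, ← mul_assoc, qkk]; simp] at h
    exact h
  intro X Y
  rw [Bsplit, pure1, pure2, Sfinal]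
  ring

end linalg

end StmtAux

end StmtAux

open StmtAux

/-- The quartic `G_{q4}(X,Y) = |X|²|Y|² − |⟨X,Y⟩_ℍ|²`, as a real form in the `8k`
real coordinates of `(X,Y) ∈ ℍ^k × ℍ^k` with `k ≥ 2`, is nonnegative but is not a
sum of squares of real polynomials. -/
theorem stmt12 (k : ℕ) (hk : 2 ≤ k) :
    (∀ X Y : Fin k → Quaternion ℝ,
        0 ≤ (∑ i, Quaternion.normSq (X i)) * (∑ i, Quaternion.normSq (Y i))
            - Quaternion.normSq (∑ i, X i * star (Y i)))
    ∧ ¬ ∃ (N : ℕ) (h : Fin N → MvPolynomial (Fin k × Bool × Fin 4) ℝ),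
        ∀ X Y : Fin k → Quaternion ℝ,
          (∑ i, Quaternion.normSq (X i)) * (∑ i, Quaternion.normSq (Y i))
              - Quaternion.normSq (∑ i, X i * star (Y i))
            = ∑ j, (eval (qcoords X Y) (h j)) ^ 2 := by
  constructor
  · intro X Y
    exact Fq_nonneg X Y
  · rintro ⟨N, h, hid⟩
    choose a b c habc using fun j => tpoly_repr (h j)
    -- the key polynomial identity
    have keyP : ∀ X Y : Fin k → Quaternion ℝ,
        (∑ j, (tpoly (qcoords X Y) (h j)) ^ 2)
          = Polynomial.C (Fq X Y) * Polynomial.X ^ 4 := by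
      intro X Y
      apply Polynomial.funext
      intro t
      rw [Polynomial.eval_finset_sum]
      have e1 : ∀ j, ((tpoly (qcoords X Y) (h j)) ^ 2).eval t
          = (eval (qcoords (t • X) (t • Y)) (h j)) ^ 2 := by
        intro j
        rw [Polynomial.eval_pow, tpoly_eval]
        congr 2
        rw [qcoords_smul]
      simp only [e1]
      rw [← hid (t • X) (t • Y)]
      have heval : (Polynomial.C (Fq X Y) * Polynomial.X ^ 4).eval t = t ^ 4 * Fq X Y := by
        simp [Polynomial.eval_mul]; ring
      rw [heval]
      have hs := Fq_smul t X Y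
      simp only [Fq] at hs
      exact hs
    -- coefficient extraction
    have ext0 : ∀ (X Y : Fin k → Quaternion ℝ) j,
        (tpoly (qcoords X Y) (h j)).coeff 0 = 0 := by
      intro X Y
      have e := congrArg (fun P : Polynomial ℝ => P.coeff 0) (keyP X Y)
      simp only [Polynomial.finset_sum_coeff, coeff_sq_zero, Polynomial.coeff_C_mul,
        Polynomial.coeff_X_pow] at e
      norm_num at e
      exact sos_eq_zero e
    have ext1 : ∀ (X Y : Fin k → Quaternion ℝ) j,
        (tpoly (qcoords X Y) (h j)).coeff 1 = 0 := by
      intro X Y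
      have e := congrArg (fun P : Polynomial ℝ => P.coeff 2) (keyP X Y)
      simp only [Polynomial.finset_sum_coeff, coeff_sq_two, ext0 X Y, Polynomial.coeff_C_mul,
        Polynomial.coeff_X_pow, mul_zero, zero_mul, zero_add] at e
      norm_num at e
      exact sos_eq_zero e
    have star1 : ∀ X Y : Fin k → Quaternion ℝ,
        (∑ j, (Bform (c j) (qcoords X Y) (qcoords X Y)) ^ 2) = Fq X Y := by
      intro X Y
      have e := congrArg (fun P : Polynomial ℝ => P.coeff 4) (keyP X Y)
      simp only [Polynomial.finset_sum_coeff, coeff_sq_four, ext0 X Y, ext1 X Y,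
        Polynomial.coeff_C_mul, Polynomial.coeff_X_pow, mul_zero, zero_mul, add_zero,
        zero_add] at e
      norm_num at e
      have e2 : ∀ j, (tpoly (qcoords X Y) (h j)).coeff 2
          = Bform (c j) (qcoords X Y) (qcoords X Y) := fun j => (habc j _).2.2
      simp only [e2] at e
      exact e
    -- each quadratic form vanishes on the equality locus of Cauchy–Schwarz
    have vanR : ∀ j (X : Fin k → Quaternion ℝ) (q : Quaternion ℝ),
        Bform (c j) (qcoords X (fun i => q * X i)) (qcoords X (fun i => q * X i)) = 0 := by
      intro j X q
      refine sos_eq_zero (f := fun j => Bform (c j) (qcoords X (fun i => q * X i))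
        (qcoords X (fun i => q * X i))) ?_ j
      rw [star1]
      exact Fq_right X q
    have vanL : ∀ j (Y : Fin k → Quaternion ℝ) (q : Quaternion ℝ),
        Bform (c j) (qcoords (fun i => q * Y i) Y) (qcoords (fun i => q * Y i) Y) = 0 := by
      intro j Y q
      refine sos_eq_zero (f := fun j => Bform (c j) (qcoords (fun i => q * Y i) Y)
        (qcoords (fun i => q * Y i) Y)) ?_ j
      rw [star1]
      exact Fq_left Y q
    -- hence each quadratic form vanishes identically
    have Ball : ∀ j (X Y : Fin k → Quaternion ℝ),
        Bform (c j) (qcoords X Y) (qcoords X Y) = 0 :=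
      fun j => key_linalg (c j) (vanR j) (vanL j)
    have Fzero : ∀ X Y : Fin k → Quaternion ℝ, Fq X Y = 0 := by
      intro X Y
      rw [← star1 X Y]
      simp [Ball]
    -- but the form is nonzero
    have h0k : (0 : ℕ) < k := by omega
    have h1k : (1 : ℕ) < k := by omega
    set i0 : Fin k := ⟨0, h0k⟩ with hi0
    set i1 : Fin k := ⟨1, h1k⟩ with hi1
    have hne : i0 ≠ i1 := by
      simp [hi0, hi1, Fin.ext_iff]
    set X₀ : Fin k → Quaternion ℝ := fun i => if i = i0 then 1 else 0 with hX₀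
    set Y₀ : Fin k → Quaternion ℝ := fun i => if i = i1 then 1 else 0 with hY₀
    have hFX : Fq X₀ Y₀ = 1 := by
      have s1 : (∑ i, Quaternion.normSq (X₀ i)) = 1 := by
        calc (∑ i, Quaternion.normSq (X₀ i)) = ∑ i, (if i = i0 then (1:ℝ) else 0) :=
              Finset.sum_congr rfl fun i _ => by by_cases hi : i = i0 <;> simp [hX₀, hi]
          _ = 1 := by simp
      have s2 : (∑ i, Quaternion.normSq (Y₀ i)) = 1 := by
        calc (∑ i, Quaternion.normSq (Y₀ i)) = ∑ i, (if i = i1 then (1:ℝ) else 0) :=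
              Finset.sum_congr rfl fun i _ => by by_cases hi : i = i1 <;> simp [hY₀, hi]
          _ = 1 := by simp
      have s3 : (∑ i, X₀ i * star (Y₀ i)) = 0 := by
        refine Finset.sum_eq_zero fun i _ => ?_
        by_cases hi : i = i0
        · subst hi
          have : Y₀ i0 = 0 := by simp [hY₀, hne]
          rw [this]
          simp
        · have : X₀ i = 0 := by simp [hX₀, hi]
          rw [this, zero_mul]
      rw [Fq, s1, s2, s3]
      simp
    rw [Fzero X₀ Y₀] at hFX
    norm_num at hFX
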